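/- Let X ∈ [0,1), μ = E[−log X] ∈ (0,∞], and α_max = inf{ c : c > 1/μ and Ψ(c) > 1 } where Ψ(c) = c Λ*(−1/c) and Λ*(z) = sup_{λ ∈ ℝ}{λz − log E[X^λ]} (with 1/μ := 0 if μ = ∞). Then for any c > α_max, the height H_n = max_{1≤i≤n} D_i of the SARRT with attachment X satisfies P(H_n ≥ c log n) → 0 as n → ∞; in fact P(H_n ≥ c log n + 2) ≤ n^{1−Ψ(c)}. -/

import Mathlib

open MeasureTheory ProbabilityTheory Filter Finset
open scoped ENNReal Classical

/-- The label of the `j`-th ancestor of node `n` in the SARRT. -/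
noncomputable def sarrtLabel {Ω : Type*} (X : ℕ → Ω → ℝ) (n : ℕ) : ℕ → Ω → ℕ
  | 0 => fun _ => n
  | j + 1 => fun ω => ⌊(sarrtLabel X n j ω : ℝ) * X (sarrtLabel X n j ω) ω⌋₊

/-- The depth of node `n` in the SARRT. -/
noncomputable def sarrtDepth {Ω : Type*} (X : ℕ → Ω → ℝ) (n : ℕ) (ω : Ω) : ℕ :=
  sInf {j : ℕ | sarrtLabel X n j ω = 0}

/-- The height `H n = max_{1 ≤ i ≤ n} D i` of the SARRT. -/
noncomputable def sarrtHeight {Ω : Type*} (X : ℕ → Ω → ℝ) (n : ℕ) (ω : Ω) : ℕ :=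
  (Finset.Icc 1 n).sup (fun i => sarrtDepth X i ω)

/-- The Fenchel–Legendre dual `Λ*(z) = sup_{λ ∈ ℝ} {λ z − log E[X₀^λ]}`, with
values in `[0,∞]`; non-integrability of `X₀^λ` means `log E[X₀^λ] = +∞`, so such
`λ` contribute nothing to the supremum. -/
noncomputable def legendreLogX {Ω : Type*} [MeasurableSpace Ω] (P : Measure Ω)
    (X0 : Ω → ℝ) (z : ℝ) : ℝ≥0∞ :=
  ⨆ l : ℝ, if Integrable (fun ω => X0 ω ^ l) P then
    ENNReal.ofReal (l * z - Real.log (∫ ω, X0 ω ^ l ∂P)) else 0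

/-- `Ψ(c) = c Λ*(-1/c)`. -/
noncomputable def psiLogX {Ω : Type*} [MeasurableSpace Ω] (P : Measure Ω)
    (X0 : Ω → ℝ) (c : ℝ) : ℝ≥0∞ :=
  ENNReal.ofReal c * legendreLogX P X0 (-1 / c)

/-- deterministic label driver -/
noncomputable def labelGen (x : ℕ → ℝ) (n : ℕ) : ℕ → ℕ
  | 0 => n
  | j + 1 => ⌊(labelGen x n j : ℝ) * x (labelGen x n j)⌋₊

lemma sarrtLabel_eq_labelGen {Ω : Type*} (X : ℕ → Ω → ℝ) (n : ℕ) (ω : Ω) :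
    ∀ j, sarrtLabel X n j ω = labelGen (fun i => X i ω) n j := by
  intro j
  induction j with
  | zero => rfl
  | succ j ih => simp only [sarrtLabel, labelGen, ih]

lemma labelGen_le {x : ℕ → ℝ} (hx : ∀ i, x i ∈ Set.Ico (0:ℝ) 1) (n : ℕ) :
    ∀ j, labelGen x n j ≤ n := by
  intro j
  induction j with
  | zero => exact le_rfl
  | succ j ih =>
    have h1 : ((labelGen x n j : ℝ)) * x (labelGen x n j) ≤ (labelGen x n j : ℝ) :=
      mul_le_of_le_one_right (Nat.cast_nonneg _) (hx _).2.le
    calc labelGen x n (j+1) = ⌊((labelGen x n j : ℝ)) * x (labelGen x n j)⌋₊ := rfl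
      _ ≤ ⌊((labelGen x n j : ℕ) : ℝ)⌋₊ := Nat.floor_le_floor h1
      _ = labelGen x n j := Nat.floor_natCast _
      _ ≤ n := ih

lemma labelGen_congr {x y : ℕ → ℝ} {n : ℕ} (hy : ∀ i, y i ∈ Set.Ico (0:ℝ) 1)
    (h : ∀ i ≤ n, x i = y i) : ∀ j, labelGen x n j = labelGen y n j := by
  intro j
  induction j with
  | zero => rfl
  | succ j ih =>
    have hle : labelGen y n j ≤ n := labelGen_le hy n j
    simp only [labelGen, ih, h _ hle]

lemma labelGen_zero_start (x : ℕ → ℝ) : ∀ j, labelGen x 0 j = 0 := by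
  intro j
  induction j with
  | zero => rfl
  | succ j ih => simp [labelGen, ih]

lemma sarrtLabel_zero_start {Ω : Type*} (X : ℕ → Ω → ℝ) (ω : Ω) (j : ℕ) :
    sarrtLabel X 0 j ω = 0 := by
  rw [sarrtLabel_eq_labelGen]; exact labelGen_zero_start _ j

lemma sarrtLabel_shift {Ω : Type*} (X : ℕ → Ω → ℝ) (m : ℕ) (ω : Ω) :
    ∀ k, sarrtLabel X m (k+1) ω = sarrtLabel X (⌊(m:ℝ) * X m ω⌋₊) k ω := by
  intro k
  induction k with
  | zero => rfl
  | succ k ih =>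
    show (⌊(sarrtLabel X m (k+1) ω : ℝ) * X (sarrtLabel X m (k+1) ω) ω⌋₊) = _
    rw [ih]; rfl

/-- evaluation helper -/
lemma measurable_eval {Ω : Type*} [MeasurableSpace Ω] {g : ℕ → Ω → ℝ}
    (hg : ∀ i, Measurable (g i)) {L : Ω → ℕ} (hL : Measurable L) :
    Measurable fun ω => g (L ω) ω := by
  have h : Measurable fun p : Ω × ℕ => g p.2 p.1 :=
    measurable_from_prod_countable_left fun i => hg i
  exact h.comp (measurable_id.prodMk hL)

lemma measurable_natCast_comp {Ω : Type*} [MeasurableSpace Ω] {L : Ω → ℕ}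
    (hL : Measurable L) : Measurable fun ω => ((L ω : ℕ) : ℝ) :=
  (measurable_from_top (f := (Nat.cast : ℕ → ℝ))).comp hL

lemma measurable_sarrtLabel {Ω : Type*} [MeasurableSpace Ω] {X : ℕ → Ω → ℝ}
    (hmeas : ∀ i, Measurable (X i)) (n : ℕ) :
    ∀ j, Measurable (sarrtLabel X n j) := by
  intro j
  induction j with
  | zero => exact measurable_const
  | succ j ih =>
    have : Measurable fun ω => ((sarrtLabel X n j ω : ℕ) : ℝ) * X (sarrtLabel X n j ω) ω :=
      (measurable_natCast_comp ih).mul (measurable_eval hmeas ih)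
    exact this.nat_floor

lemma measurable_labelGen (n : ℕ) :
    ∀ j, Measurable fun x : ℕ → ℝ => labelGen x n j := by
  intro j
  induction j with
  | zero => exact measurable_const
  | succ j ih =>
    have : Measurable fun x : ℕ → ℝ =>
        ((labelGen x n j : ℕ) : ℝ) * x (labelGen x n j) :=
      (measurable_natCast_comp ih).mul
        (measurable_eval (fun i => measurable_pi_apply i) ih)
    exact this.nat_floor

lemma sarrtLabel_le_prod {Ω : Type*} {X : ℕ → Ω → ℝ}
    (hrange : ∀ i ω, X i ω ∈ Set.Ico (0:ℝ) 1) (m : ℕ) (ω : Ω) :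
    ∀ k, (sarrtLabel X m k ω : ℝ) ≤ (m : ℝ) * ∏ j ∈ Finset.range k, X (sarrtLabel X m j ω) ω := by
  intro k
  induction k with
  | zero => simp [sarrtLabel]
  | succ k ih =>
    have h0 : (0:ℝ) ≤ X (sarrtLabel X m k ω) ω := (hrange _ _).1
    calc (sarrtLabel X m (k+1) ω : ℝ)
        = (⌊(sarrtLabel X m k ω : ℝ) * X (sarrtLabel X m k ω) ω⌋₊ : ℝ) := rfl
      _ ≤ (sarrtLabel X m k ω : ℝ) * X (sarrtLabel X m k ω) ω :=
          Nat.floor_le (mul_nonneg (Nat.cast_nonneg _) h0)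
      _ ≤ ((m : ℝ) * ∏ j ∈ Finset.range k, X (sarrtLabel X m j ω) ω) *
            X (sarrtLabel X m k ω) ω := mul_le_mul_of_nonneg_right ih h0
      _ = (m : ℝ) * ∏ j ∈ Finset.range (k+1), X (sarrtLabel X m j ω) ω := by
          rw [Finset.prod_range_succ]; ring
/-- deterministic Chernoff weight -/
noncomputable def chernGen (x : ℕ → ℝ) (l : ℝ) (k n : ℕ) : ℝ :=
  if labelGen x n k = 0 then 0 else ∏ j ∈ Finset.range k, x (labelGen x n j) ^ l

noncomputable def chernProd {Ω : Type*} (X : ℕ → Ω → ℝ) (l : ℝ) (k n : ℕ) (ω : Ω) : ℝ :=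
  if sarrtLabel X n k ω = 0 then 0
  else ∏ j ∈ Finset.range k, X (sarrtLabel X n j ω) ω ^ l

lemma chernProd_eq_chernGen {Ω : Type*} (X : ℕ → Ω → ℝ) (l : ℝ) (k n : ℕ) (ω : Ω) :
    chernProd X l k n ω = chernGen (fun i => X i ω) l k n := by
  simp only [chernProd, chernGen, sarrtLabel_eq_labelGen]

lemma chernGen_congr {x y : ℕ → ℝ} {n : ℕ} (hy : ∀ i, y i ∈ Set.Ico (0:ℝ) 1)
    (h : ∀ i ≤ n, x i = y i) (l : ℝ) (k : ℕ) : chernGen x l k n = chernGen y l k n := by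
  have hl : ∀ j, labelGen x n j = labelGen y n j := labelGen_congr hy h
  simp only [chernGen, hl]
  congr 1
  refine Finset.prod_congr rfl fun j _ => ?_
  rw [h _ ((labelGen_le hy n j))]

lemma chernProd_nonneg {Ω : Type*} {X : ℕ → Ω → ℝ}
    (hrange : ∀ i ω, X i ω ∈ Set.Ico (0:ℝ) 1) (l : ℝ) (k n : ℕ) (ω : Ω) :
    0 ≤ chernProd X l k n ω := by
  unfold chernProd
  split
  · exact le_rfl
  · exact Finset.prod_nonneg fun j _ => Real.rpow_nonneg (hrange _ _).1 _

lemma chernProd_le_one {Ω : Type*} {X : ℕ → Ω → ℝ}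
    (hrange : ∀ i ω, X i ω ∈ Set.Ico (0:ℝ) 1) {l : ℝ} (hl : 0 ≤ l) (k n : ℕ) (ω : Ω) :
    chernProd X l k n ω ≤ 1 := by
  unfold chernProd
  split
  · exact zero_le_one
  · exact Finset.prod_le_one (fun j _ => Real.rpow_nonneg (hrange _ _).1 _)
      (fun j _ => Real.rpow_le_one (hrange _ _).1 (hrange _ _).2.le hl)

lemma measurable_chernGen {l : ℝ} (hl : 0 ≤ l) (k n : ℕ) :
    Measurable fun x : ℕ → ℝ => chernGen x l k n := by
  unfold chernGen
  have hset : MeasurableSet {x : ℕ → ℝ | labelGen x n k = 0} :=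
    (measurable_labelGen n k) (MeasurableSet.singleton 0)
  refine Measurable.ite hset measurable_const ?_
  refine Finset.measurable_prod _ fun j _ => ?_
  exact (Real.continuous_rpow_const hl).measurable.comp
    (measurable_eval (fun i => measurable_pi_apply i) (measurable_labelGen n j))

lemma measurable_chernProd {Ω : Type*} [MeasurableSpace Ω] {X : ℕ → Ω → ℝ}
    (hmeas : ∀ i, Measurable (X i)) {l : ℝ} (hl : 0 ≤ l) (k n : ℕ) :
    Measurable (chernProd X l k n) := by
  have : chernProd X l k n = (fun x : ℕ → ℝ => chernGen x l k n) ∘ (fun ω i => X i ω) := by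
    funext ω; exact chernProd_eq_chernGen X l k n ω
  rw [this]
  exact (measurable_chernGen hl k n).comp (measurable_pi_lambda _ fun i => hmeas i)

lemma integrable_of_bound {Ω : Type*} [MeasurableSpace Ω] {P : Measure Ω}
    [IsFiniteMeasure P] {f : Ω → ℝ} (hf : Measurable f) (C : ℝ)
    (hb : ∀ ω, |f ω| ≤ C) : Integrable f P :=
  ⟨hf.aestronglyMeasurable,
    HasFiniteIntegral.of_bounded (C := C) (Filter.Eventually.of_forall fun ω => by
      simpa [Real.norm_eq_abs] using hb ω)⟩
lemma chern_integral_le {Ω : Type*} [MeasurableSpace Ω] (P : Measure Ω)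
    [IsProbabilityMeasure P] {X : ℕ → Ω → ℝ}
    (hmeas : ∀ i, Measurable (X i))
    (hrange : ∀ i ω, X i ω ∈ Set.Ico (0:ℝ) 1)
    (hindep : iIndepFun X P)
    (hident : ∀ i, IdentDistrib (X i) (X 0) P P)
    {l : ℝ} (hl : 0 < l) :
    ∀ k m, ∫ ω, chernProd X l k m ω ∂P ≤ (∫ ω, X 0 ω ^ l ∂P) ^ k := by
  set q := ∫ ω, X 0 ω ^ l ∂P with hqdef
  have hq0 : 0 ≤ q := integral_nonneg fun ω => Real.rpow_nonneg (hrange 0 ω).1 _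
  have hrpowmeas : Measurable fun x : ℝ => x ^ l := (Real.continuous_rpow_const hl.le).measurable
  intro k
  induction k with
  | zero =>
    intro m
    rcases Nat.eq_zero_or_pos m with hm | hm
    · subst hm
      have hz : ∀ ω : Ω, chernProd X l 0 0 ω = 0 := fun ω => by
        simp [chernProd, sarrtLabel_zero_start]
      rw [show (fun ω => chernProd X l 0 0 ω) = fun _ => (0:ℝ) from funext hz]
      simp
    · have hz : ∀ ω : Ω, chernProd X l 0 m ω = 1 := fun ω => by
        simp [chernProd, sarrtLabel, Nat.pos_iff_ne_zero.1 hm]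
      rw [show (fun ω => chernProd X l 0 m ω) = fun _ => (1:ℝ) from funext hz]
      simp
  | succ k IH =>
    intro m
    rcases Nat.eq_zero_or_pos m with hm | hm
    · subst hm
      have hz : ∀ ω : Ω, chernProd X l (k+1) 0 ω = 0 := fun ω => by
        simp [chernProd, sarrtLabel_zero_start]
      rw [show (fun ω => chernProd X l (k+1) 0 ω) = fun _ => (0:ℝ) from funext hz]
      simp
      positivity
    · have hm0 : (0:ℝ) < m := by exact_mod_cast hm
      have hfl : ∀ ω, ⌊(m:ℝ) * X m ω⌋₊ ∈ Finset.range m := by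
        intro ω
        rw [Finset.mem_range]
        refine (Nat.floor_lt (mul_nonneg hm0.le (hrange m ω).1)).2 ?_
        exact mul_lt_of_lt_one_right hm0 (hrange m ω).2
      -- measurability and integrability of the pieces
      have hφmeas : ∀ i : ℕ, Measurable fun ω =>
          (if ⌊(m:ℝ) * X m ω⌋₊ = i then X m ω ^ l else 0) := by
        intro i
        have hs : MeasurableSet {ω : Ω | ⌊(m:ℝ) * X m ω⌋₊ = i} :=
          (((hmeas m).const_mul (m:ℝ)).nat_floor) (MeasurableSet.singleton i)
        exact Measurable.ite hs (hrpowmeas.comp (hmeas m)) measurable_const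
      have hφbd : ∀ i ω, |if ⌊(m:ℝ) * X m ω⌋₊ = i then X m ω ^ l else 0| ≤ 1 := by
        intro i ω
        split
        · rw [abs_of_nonneg (Real.rpow_nonneg (hrange m ω).1 _)]
          exact Real.rpow_le_one (hrange m ω).1 (hrange m ω).2.le hl.le
        · simp
      have hφint : ∀ i : ℕ, Integrable
          (fun ω => if ⌊(m:ℝ) * X m ω⌋₊ = i then X m ω ^ l else 0) P :=
        fun i => integrable_of_bound (hφmeas i) 1 (hφbd i)
      have hcint : ∀ i : ℕ, Integrable (chernProd X l k i) P := by
        intro i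
        refine integrable_of_bound (measurable_chernProd hmeas hl.le k i) 1 fun ω => ?_
        rw [abs_of_nonneg (chernProd_nonneg hrange l k i ω)]
        exact chernProd_le_one hrange hl.le k i ω
      have hint_term : ∀ i ∈ Finset.range m, Integrable
          (fun ω => (if ⌊(m:ℝ) * X m ω⌋₊ = i then X m ω ^ l else 0)
            * chernProd X l k i ω) P := by
        intro i _
        refine integrable_of_bound ((hφmeas i).mul (measurable_chernProd hmeas hl.le k i)) 1
          fun ω => ?_
        rw [abs_mul]
        calc |if ⌊(m:ℝ) * X m ω⌋₊ = i then X m ω ^ l else 0| * |chernProd X l k i ω|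
            ≤ 1 * 1 := by
              refine mul_le_mul (hφbd i ω) ?_ (abs_nonneg _) zero_le_one
              rw [abs_of_nonneg (chernProd_nonneg hrange l k i ω)]
              exact chernProd_le_one hrange hl.le k i ω
          _ = 1 := by ring
      -- pointwise decomposition
      have key : ∀ ω, chernProd X l (k+1) m ω =
          ∑ i ∈ Finset.range m,
            (if ⌊(m:ℝ) * X m ω⌋₊ = i then X m ω ^ l else 0) * chernProd X l k i ω := by
        intro ω
        have hsum : ∑ i ∈ Finset.range m,
            (if ⌊(m:ℝ) * X m ω⌋₊ = i then X m ω ^ l else 0) * chernProd X l k i ω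
            = X m ω ^ l * chernProd X l k (⌊(m:ℝ) * X m ω⌋₊) ω := by
          simp only [ite_mul, zero_mul]
          rw [Finset.sum_ite_eq, if_pos (hfl ω)]
        rw [hsum]
        by_cases h0 : sarrtLabel X m (k+1) ω = 0
        · have h0' : sarrtLabel X (⌊(m:ℝ) * X m ω⌋₊) k ω = 0 := by
            rw [← sarrtLabel_shift]; exact h0
          simp [chernProd, h0, h0']
        · have h0' : ¬ sarrtLabel X (⌊(m:ℝ) * X m ω⌋₊) k ω = 0 := by
            rw [← sarrtLabel_shift]; exact h0
          simp only [chernProd, if_neg h0, if_neg h0']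
          rw [Finset.prod_range_succ']
          have hsh : ∀ j, sarrtLabel X m (j+1) ω = sarrtLabel X (⌊(m:ℝ) * X m ω⌋₊) j ω :=
            sarrtLabel_shift X m ω
          simp only [hsh]
          rw [mul_comm]
          rfl
      -- independence factorization
      have hfact : ∀ i ∈ Finset.range m,
          ∫ ω, (if ⌊(m:ℝ) * X m ω⌋₊ = i then X m ω ^ l else 0)
              * chernProd X l k i ω ∂P
          = (∫ ω, (if ⌊(m:ℝ) * X m ω⌋₊ = i then X m ω ^ l else 0) ∂P)
            * ∫ ω, chernProd X l k i ω ∂P := by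
        intro i hi
        have him : i < m := Finset.mem_range.1 hi
        have hd : Disjoint ({m} : Finset ℕ) (Finset.range m) := by
          simp [Finset.disjoint_left]
        have hind := hindep.indepFun_finset {m} (Finset.range m) hd hmeas
        set A : Ω → (({m} : Finset ℕ) → ℝ) := fun ω j => X j ω with hA
        set B : Ω → (((Finset.range m) : Finset ℕ) → ℝ) := fun ω j => X j ω with hB
        set φ : (({m} : Finset ℕ) → ℝ) → ℝ :=
          fun v => if ⌊(m:ℝ) * v ⟨m, Finset.mem_singleton_self m⟩⌋₊ = i
            then v ⟨m, Finset.mem_singleton_self m⟩ ^ l else 0 with hφ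
        set ψ : (((Finset.range m) : Finset ℕ) → ℝ) → ℝ :=
          fun v => chernGen (fun j => if h : j ∈ Finset.range m then v ⟨j, h⟩ else 0) l k i
          with hψ
        have hφm : Measurable φ := by
          have hev : Measurable fun v : (({m} : Finset ℕ) → ℝ) =>
              v ⟨m, Finset.mem_singleton_self m⟩ := measurable_pi_apply _
          have hs : MeasurableSet {v : (({m} : Finset ℕ) → ℝ) |
              ⌊(m:ℝ) * v ⟨m, Finset.mem_singleton_self m⟩⌋₊ = i} :=
            ((hev.const_mul (m:ℝ)).nat_floor) (MeasurableSet.singleton i)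
          exact Measurable.ite hs (hrpowmeas.comp hev) measurable_const
        have hψm : Measurable ψ := by
          refine (measurable_chernGen hl.le k i).comp ?_
          refine measurable_pi_lambda _ fun j => ?_
          by_cases h : j ∈ Finset.range m
          · simp only [dif_pos h]; exact measurable_pi_apply _
          · simp only [dif_neg h]; exact measurable_const
        have hcomp1 : (fun ω => if ⌊(m:ℝ) * X m ω⌋₊ = i then X m ω ^ l else 0) = φ ∘ A := by
          funext ω; rfl
        have hcomp2 : chernProd X l k i = ψ ∘ B := by
          funext ω
          simp only [Function.comp_apply, hψ, hB]
          rw [chernProd_eq_chernGen]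
          refine (chernGen_congr (fun j => hrange j ω) ?_ l k).symm
          intro j hj
          rw [dif_pos (Finset.mem_range.2 (lt_of_le_of_lt hj him))]
        have hI : IndepFun (fun ω => if ⌊(m:ℝ) * X m ω⌋₊ = i then X m ω ^ l else 0)
            (chernProd X l k i) P := by
          rw [hcomp1, hcomp2]
          exact hind.comp hφm hψm
        exact hI.integral_mul_eq_mul_integral (hφint i).aestronglyMeasurable (hcint i).aestronglyMeasurable
      have hφ_nonneg : ∀ i : ℕ, 0 ≤ ∫ ω,
          (if ⌊(m:ℝ) * X m ω⌋₊ = i then X m ω ^ l else 0) ∂P := by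
        intro i
        refine integral_nonneg fun ω => ?_
        split
        · exact Real.rpow_nonneg (hrange m ω).1 _
        · exact le_rfl
      have hXml : ∫ ω, X m ω ^ l ∂P = q := by
        have h := ((hident m).comp (u := fun x : ℝ => x ^ l) hrpowmeas).integral_eq
        simpa [Function.comp] using h
      calc ∫ ω, chernProd X l (k+1) m ω ∂P
          = ∫ ω, ∑ i ∈ Finset.range m,
              (if ⌊(m:ℝ) * X m ω⌋₊ = i then X m ω ^ l else 0)
                * chernProd X l k i ω ∂P := by
            exact integral_congr_ae (Filter.Eventually.of_forall key)
        _ = ∑ i ∈ Finset.range m, ∫ ω,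
              (if ⌊(m:ℝ) * X m ω⌋₊ = i then X m ω ^ l else 0)
                * chernProd X l k i ω ∂P := integral_finset_sum _ hint_term
        _ = ∑ i ∈ Finset.range m,
              (∫ ω, (if ⌊(m:ℝ) * X m ω⌋₊ = i then X m ω ^ l else 0) ∂P)
                * ∫ ω, chernProd X l k i ω ∂P := Finset.sum_congr rfl hfact
        _ ≤ ∑ i ∈ Finset.range m,
              (∫ ω, (if ⌊(m:ℝ) * X m ω⌋₊ = i then X m ω ^ l else 0) ∂P) * q ^ k :=
            Finset.sum_le_sum fun i _ =>
              mul_le_mul_of_nonneg_left (IH i) (hφ_nonneg i)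
        _ = (∑ i ∈ Finset.range m, ∫ ω,
              (if ⌊(m:ℝ) * X m ω⌋₊ = i then X m ω ^ l else 0) ∂P) * q ^ k := by
            rw [Finset.sum_mul]
        _ = (∫ ω, X m ω ^ l ∂P) * q ^ k := by
            rw [← integral_finset_sum _ (fun i _ => hφint i)]
            congr 1
            refine integral_congr_ae (Filter.Eventually.of_forall fun ω => ?_)
            show ∑ i ∈ Finset.range m,
              (if ⌊(m:ℝ) * X m ω⌋₊ = i then X m ω ^ l else 0) = X m ω ^ l
            rw [Finset.sum_ite_eq, if_pos (hfl ω)]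
        _ = q ^ (k+1) := by rw [hXml, pow_succ]; ring
lemma node_bound {Ω : Type*} [MeasurableSpace Ω] (P : Measure Ω)
    [IsProbabilityMeasure P] {X : ℕ → Ω → ℝ}
    (hmeas : ∀ i, Measurable (X i))
    (hrange : ∀ i ω, X i ω ∈ Set.Ico (0:ℝ) 1)
    (hindep : iIndepFun X P)
    (hident : ∀ i, IdentDistrib (X i) (X 0) P P)
    {l : ℝ} (hl : 0 < l) (m k : ℕ) :
    P {ω | sarrtLabel X m k ω ≠ 0}
      ≤ ENNReal.ofReal ((m:ℝ) ^ l * (∫ ω, X 0 ω ^ l ∂P) ^ k) := by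
  set q := ∫ ω, X 0 ω ^ l ∂P with hqdef
  set A := {ω | sarrtLabel X m k ω ≠ 0} with hAdef
  have hA : MeasurableSet A := by
    have : A = (sarrtLabel X m k ⁻¹' {0})ᶜ := by
      ext ω; simp [hAdef]
    rw [this]
    exact ((measurable_sarrtLabel hmeas m k) (MeasurableSet.singleton 0)).compl
  have hpt : ∀ ω, A.indicator (1 : Ω → ℝ) ω ≤ (m:ℝ) ^ l * chernProd X l k m ω := by
    intro ω
    by_cases hω : ω ∈ A
    · rw [Set.indicator_of_mem hω]
      have hne : sarrtLabel X m k ω ≠ 0 := hω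
      have h1L : (1:ℝ) ≤ (sarrtLabel X m k ω : ℝ) := by
        exact_mod_cast Nat.one_le_iff_ne_zero.2 hne
      have h1 : (1:ℝ) ≤ (m:ℝ) * ∏ j ∈ Finset.range k, X (sarrtLabel X m j ω) ω :=
        h1L.trans (sarrtLabel_le_prod hrange m ω k)
      have h2 : (1:ℝ) ≤ ((m:ℝ) * ∏ j ∈ Finset.range k, X (sarrtLabel X m j ω) ω) ^ l :=
        Real.one_le_rpow h1 hl.le
      have h3 : ((m:ℝ) * ∏ j ∈ Finset.range k, X (sarrtLabel X m j ω) ω) ^ l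
          = (m:ℝ) ^ l * ∏ j ∈ Finset.range k, X (sarrtLabel X m j ω) ω ^ l := by
        rw [Real.mul_rpow (Nat.cast_nonneg m)
          (Finset.prod_nonneg fun j _ => (hrange _ _).1),
          Real.finset_prod_rpow _ _ (fun j _ => (hrange _ _).1)]
      have hch : chernProd X l k m ω
          = ∏ j ∈ Finset.range k, X (sarrtLabel X m j ω) ω ^ l := by
        simp [chernProd, hne]
      rw [hch]
      calc (1:ℝ) ≤ _ := h2
        _ = _ := h3
    · rw [Set.indicator_of_notMem hω]
      exact mul_nonneg (Real.rpow_nonneg (Nat.cast_nonneg m) l)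
        (chernProd_nonneg hrange l k m ω)
  have hint1 : Integrable (A.indicator (1 : Ω → ℝ)) P :=
    (integrable_const (1:ℝ)).indicator hA
  have hint2 : Integrable (fun ω => (m:ℝ) ^ l * chernProd X l k m ω) P := by
    refine Integrable.const_mul ?_ _
    refine integrable_of_bound (measurable_chernProd hmeas hl.le k m) 1 fun ω => ?_
    rw [abs_of_nonneg (chernProd_nonneg hrange l k m ω)]
    exact chernProd_le_one hrange hl.le k m ω
  calc P A = ENNReal.ofReal (∫ ω, A.indicator (1 : Ω → ℝ) ω ∂P) := by
        rw [integral_indicator_one hA, measureReal_def, ENNReal.ofReal_toReal (measure_ne_top P A)]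
    _ ≤ ENNReal.ofReal (∫ ω, (m:ℝ) ^ l * chernProd X l k m ω ∂P) :=
        ENNReal.ofReal_le_ofReal (integral_mono hint1 hint2 hpt)
    _ = ENNReal.ofReal ((m:ℝ) ^ l * ∫ ω, chernProd X l k m ω ∂P) := by
        rw [integral_const_mul]
    _ ≤ ENNReal.ofReal ((m:ℝ) ^ l * q ^ k) := by
        refine ENNReal.ofReal_le_ofReal (mul_le_mul_of_nonneg_left ?_
          (Real.rpow_nonneg (Nat.cast_nonneg m) l))
        exact chern_integral_le P hmeas hrange hindep hident hl k m

lemma depth_subset_label {Ω : Type*} (X : ℕ → Ω → ℝ) (m k : ℕ) :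
    {ω | k + 1 ≤ sarrtDepth X m ω} ⊆ {ω | sarrtLabel X m k ω ≠ 0} := by
  intro ω h
  simp only [Set.mem_setOf_eq] at h ⊢
  intro h0
  have : sarrtDepth X m ω ≤ k := Nat.sInf_le h0
  omega

lemma height_subset {Ω : Type*} (X : ℕ → Ω → ℝ) (n K : ℕ) (hK : 0 < K) :
    {ω | K ≤ sarrtHeight X n ω}
      ⊆ ⋃ i ∈ Finset.Icc 1 n, {ω | K ≤ sarrtDepth X i ω} := by
  intro ω h
  simp only [Set.mem_setOf_eq, sarrtHeight] at h
  obtain ⟨i, hi, hKi⟩ := (Finset.le_sup_iff hK).1 h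
  exact Set.mem_biUnion hi hKi
lemma height_bound_single {Ω : Type*} [MeasurableSpace Ω] (P : Measure Ω)
    [IsProbabilityMeasure P] {X : ℕ → Ω → ℝ}
    (hmeas : ∀ i, Measurable (X i))
    (hrange : ∀ i ω, X i ω ∈ Set.Ico (0:ℝ) 1)
    (hindep : iIndepFun X P)
    (hident : ∀ i, IdentDistrib (X i) (X 0) P P)
    {l : ℝ} (hl : 0 < l) {c : ℝ} (hc : 0 < c) {n : ℕ} (hn : 1 ≤ n)
    (hq_pos : 0 < ∫ ω, X 0 ω ^ l ∂P) :
    P {ω | c * Real.log n + 2 ≤ (sarrtHeight X n ω : ℝ)}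
      ≤ ENNReal.ofReal ((n:ℝ) ^ (1 + l + c * Real.log (∫ ω, X 0 ω ^ l ∂P))) := by
  set q := ∫ ω, X 0 ω ^ l ∂P with hqdef
  have hn0 : (0:ℝ) < n := by exact_mod_cast hn
  have hlogn : 0 ≤ Real.log n := Real.log_nonneg (by exact_mod_cast hn)
  have hq1 : q ≤ 1 := by
    have h1 : ∫ ω, X 0 ω ^ l ∂P ≤ ∫ _ω, (1:ℝ) ∂P := by
      refine integral_mono ?_ (integrable_const 1) ?_
      · refine integrable_of_bound
          (((Real.continuous_rpow_const hl.le).measurable).comp (hmeas 0)) 1 fun ω => ?_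
        rw [abs_of_nonneg (Real.rpow_nonneg (hrange 0 ω).1 _)]
        exact Real.rpow_le_one (hrange 0 ω).1 (hrange 0 ω).2.le hl.le
      · intro ω
        exact Real.rpow_le_one (hrange 0 ω).1 (hrange 0 ω).2.le hl.le
    simpa using h1
  set k0 := ⌈c * Real.log n⌉₊ + 1 with hk0
  -- event inclusion
  have hsub : {ω | c * Real.log n + 2 ≤ (sarrtHeight X n ω : ℝ)}
      ⊆ ⋃ i ∈ Finset.Icc 1 n, {ω | sarrtLabel X i k0 ω ≠ 0} := by
    intro ω hω
    simp only [Set.mem_setOf_eq] at hω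
    have hK : k0 + 1 ≤ sarrtHeight X n ω := by
      have h1 : ⌈c * Real.log n + 2⌉₊ ≤ sarrtHeight X n ω := Nat.ceil_le.2 hω
      have h2 : ⌈c * Real.log n + 2⌉₊ = ⌈c * Real.log n⌉₊ + 2 := by
        rw [show (2:ℝ) = ((2:ℕ):ℝ) by norm_num, Nat.ceil_add_natCast (mul_nonneg hc.le hlogn)]
      omega
    have := height_subset X n (k0+1) (by omega) hK
    simp only [Set.mem_iUnion] at this ⊢
    obtain ⟨i, hi, hdi⟩ := this
    exact ⟨i, hi, depth_subset_label X i k0 hdi⟩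
  calc P {ω | c * Real.log n + 2 ≤ (sarrtHeight X n ω : ℝ)}
      ≤ P (⋃ i ∈ Finset.Icc 1 n, {ω | sarrtLabel X i k0 ω ≠ 0}) := measure_mono hsub
    _ ≤ ∑ i ∈ Finset.Icc 1 n, P {ω | sarrtLabel X i k0 ω ≠ 0} :=
        measure_biUnion_finset_le _ _
    _ ≤ ∑ _i ∈ Finset.Icc 1 n, ENNReal.ofReal ((n:ℝ) ^ l * q ^ k0) := by
        refine Finset.sum_le_sum fun i hi => ?_
        refine (node_bound P hmeas hrange hindep hident hl i k0).trans ?_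
        refine ENNReal.ofReal_le_ofReal (mul_le_mul_of_nonneg_right ?_
          (pow_nonneg hq_pos.le _))
        refine Real.rpow_le_rpow (Nat.cast_nonneg i) ?_ hl.le
        exact_mod_cast (Finset.mem_Icc.1 hi).2
    _ = (n : ℝ≥0∞) * ENNReal.ofReal ((n:ℝ) ^ l * q ^ k0) := by
        rw [Finset.sum_const, Nat.card_Icc]
        simp [nsmul_eq_mul]
    _ = ENNReal.ofReal ((n:ℝ) * ((n:ℝ) ^ l * q ^ k0)) := by
        rw [ENNReal.ofReal_mul (Nat.cast_nonneg n), ENNReal.ofReal_natCast]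
    _ ≤ ENNReal.ofReal ((n:ℝ) ^ (1 + l + c * Real.log q)) := by
        refine ENNReal.ofReal_le_ofReal ?_
        have hb1 : q ^ k0 ≤ q ^ (c * Real.log n + 1) := by
          rw [← Real.rpow_natCast q k0]
          refine Real.rpow_le_rpow_of_exponent_ge hq_pos hq1 ?_
          push_cast [hk0]
          have := Nat.le_ceil (c * Real.log n)
          linarith
        have hb2 : q ^ (c * Real.log n + 1) ≤ q ^ (c * Real.log n) := by
          rw [Real.rpow_add hq_pos, Real.rpow_one]
          exact mul_le_of_le_one_right (Real.rpow_nonneg hq_pos.le _) hq1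
        have hb3 : q ^ (c * Real.log n) = (n:ℝ) ^ (c * Real.log q) := by
          rw [Real.rpow_def_of_pos hq_pos, Real.rpow_def_of_pos hn0]
          congr 1; ring
        have hexp : (n:ℝ) ^ (1 + l + c * Real.log q)
            = (n:ℝ) * ((n:ℝ) ^ l * (n:ℝ) ^ (c * Real.log q)) := by
          rw [Real.rpow_add hn0, Real.rpow_add hn0, Real.rpow_one]
          ring
        rw [hexp]
        refine mul_le_mul_of_nonneg_left ?_ (Nat.cast_nonneg n)
        refine mul_le_mul_of_nonneg_left ?_ (Real.rpow_nonneg (Nat.cast_nonneg n) _)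
        calc q ^ k0 ≤ q ^ (c * Real.log n + 1) := hb1
          _ ≤ q ^ (c * Real.log n) := hb2
          _ = (n:ℝ) ^ (c * Real.log q) := hb3
lemma height_bound {Ω : Type*} [MeasurableSpace Ω] (P : Measure Ω)
    [IsProbabilityMeasure P] {X : ℕ → Ω → ℝ}
    (hmeas : ∀ i, Measurable (X i))
    (hrange : ∀ i ω, X i ω ∈ Set.Ico (0:ℝ) 1)
    (hindep : iIndepFun X P)
    (hident : ∀ i, IdentDistrib (X i) (X 0) P P)
    (hw : 0 < P {ω | X 0 ω ≠ 0})
    (μ : ℝ≥0∞) (hμ : μ = ∫⁻ ω, ENNReal.ofReal (- Real.log (X 0 ω)) ∂P)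
    {c : ℝ} (hc : 0 < c) (hcμ : ENNReal.ofReal (1/c) < μ)
    {n : ℕ} (hn : 1 ≤ n) {r : ℝ} (hr : ENNReal.ofReal r ≤ psiLogX P (X 0) c) :
    P {ω | c * Real.log n + 2 ≤ (sarrtHeight X n ω : ℝ)} ≤ (n : ℝ≥0∞) ^ (1 - r) := by
  have hn0 : (0:ℝ) < n := by exact_mod_cast hn
  have hn1 : (1:ℝ) ≤ n := by exact_mod_cast hn
  -- the support event and its mass
  set A := {ω | X 0 ω ≠ 0} with hAdef
  have hAm : MeasurableSet A := by
    have : A = (X 0 ⁻¹' {0})ᶜ := by ext ω; simp [hAdef]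
    rw [this]; exact ((hmeas 0) (MeasurableSet.singleton 0)).compl
  set w := (P A).toReal with hwdef
  have hw0 : 0 < w := ENNReal.toReal_pos hw.ne' (measure_ne_top P A)
  have hw1 : w ≤ 1 := by
    rw [hwdef]
    exact ENNReal.toReal_le_of_le_ofReal zero_le_one (by simpa using prob_le_one (μ := P) (s := A))
  have hIint : Integrable (A.indicator (1 : Ω → ℝ)) P := (integrable_const (1:ℝ)).indicator hAm
  have hIw : ∫ ω, A.indicator (1 : Ω → ℝ) ω ∂P = w := integral_indicator_one hAm
  -- basic facts about q_l for l > 0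
  have hql_int : ∀ l : ℝ, 0 < l → Integrable (fun ω => X 0 ω ^ l) P := by
    intro l hl
    refine integrable_of_bound
      (((Real.continuous_rpow_const hl.le).measurable).comp (hmeas 0)) 1 fun ω => ?_
    rw [abs_of_nonneg (Real.rpow_nonneg (hrange 0 ω).1 _)]
    exact Real.rpow_le_one (hrange 0 ω).1 (hrange 0 ω).2.le hl.le
  have hql_pos : ∀ l : ℝ, 0 < l → 0 < ∫ ω, X 0 ω ^ l ∂P := by
    intro l hl
    rw [integral_pos_iff_support_of_nonneg (fun ω => Real.rpow_nonneg (hrange 0 ω).1 _)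
      (hql_int l hl)]
    have hsupp : Function.support (fun ω => X 0 ω ^ l) = A := by
      ext ω
      simp only [Function.mem_support, hAdef, Set.mem_setOf_eq]
      constructor
      · intro h h0; exact h (by rw [h0, Real.zero_rpow hl.ne'])
      · intro h hcontra
        exact h ((Real.rpow_eq_zero_iff_of_nonneg (hrange 0 ω).1).1 hcontra).1
    rw [hsupp]; exact hw
  have hql_le_w : ∀ l : ℝ, 0 < l → ∫ ω, X 0 ω ^ l ∂P ≤ w := by
    intro l hl
    rw [← hIw]
    refine integral_mono (hql_int l hl) hIint fun ω => ?_
    by_cases h0 : X 0 ω = 0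
    · rw [h0, Real.zero_rpow hl.ne']
      exact Set.indicator_nonneg (fun _ _ => zero_le_one) ω
    · have : ω ∈ A := h0
      rw [Set.indicator_of_mem this]
      exact Real.rpow_le_one (hrange 0 ω).1 (hrange 0 ω).2.le hl.le
  -- main ε-free step
  have key : ∀ u : ℝ, u < r →
      P {ω | c * Real.log n + 2 ≤ (sarrtHeight X n ω : ℝ)}
        ≤ ENNReal.ofReal ((n:ℝ) ^ (1 - u)) := by
    intro u hur
    by_cases hu0 : u ≤ 0
    · calc P {ω | c * Real.log n + 2 ≤ (sarrtHeight X n ω : ℝ)} ≤ 1 := prob_le_one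
        _ = ENNReal.ofReal 1 := by simp
        _ ≤ ENNReal.ofReal ((n:ℝ) ^ (1 - u)) :=
            ENNReal.ofReal_le_ofReal (Real.one_le_rpow hn1 (by linarith))
    · push_neg at hu0
      -- extract a witness exponent from the Legendre supremum
      have h1 : ENNReal.ofReal u < psiLogX P (X 0) c :=
        lt_of_lt_of_le ((ENNReal.ofReal_lt_ofReal_iff_of_nonneg hu0.le).2 hur) hr
      rw [psiLogX, legendreLogX, ENNReal.mul_iSup] at h1
      obtain ⟨l, hl⟩ := lt_iSup_iff.1 h1
      by_cases hint : Integrable (fun ω => X 0 ω ^ l) P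
      · rw [if_pos hint, ← ENNReal.ofReal_mul hc.le] at hl
        have hul : u < c * (l * (-1 / c) - Real.log (∫ ω, X 0 ω ^ l ∂P)) := by
          by_contra hcon
          push_neg at hcon
          exact absurd (lt_of_lt_of_le hl (ENNReal.ofReal_le_ofReal hcon)) (lt_irrefl _)
        have hexp : c * (l * (-1 / c) - Real.log (∫ ω, X 0 ω ^ l ∂P))
            = -l - c * Real.log (∫ ω, X 0 ω ^ l ∂P) := by
          field_simp
        rw [hexp] at hul
        -- find a strictly positive exponent doing the job
        have hfind : ∃ l' : ℝ, 0 < l' ∧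
            u < -l' - c * Real.log (∫ ω, X 0 ω ^ l' ∂P) := by
          rcases lt_trichotomy l 0 with hlneg | hlzero | hlpos
          · -- negative exponent: use the mean bound to pass to small positive exponents
            -- first, integrability of Y = -log X₀
            set t := -l with htdef
            have ht : 0 < t := by simp [htdef]; linarith
            set Y := fun ω => -Real.log (X 0 ω) with hYdef
            have hY0 : ∀ ω, 0 ≤ Y ω := fun ω =>
              neg_nonneg.2 (Real.log_nonpos (hrange 0 ω).1 (hrange 0 ω).2.le)
            have hYmeas : Measurable Y := (Real.measurable_log.comp (hmeas 0)).neg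
            have hXlY : ∀ ω, X 0 ω ≠ 0 → X 0 ω ^ l = Real.exp (t * Y ω) := by
              intro ω h0
              have hxpos : 0 < X 0 ω := lt_of_le_of_ne (hrange 0 ω).1 (Ne.symm h0)
              rw [Real.rpow_def_of_pos hxpos]
              congr 1
              simp [hYdef, htdef]; ring
            have hYle : ∀ ω, Y ω ≤ X 0 ω ^ l / t := by
              intro ω
              by_cases h0 : X 0 ω = 0
              · simp [hYdef, h0, Real.zero_rpow (ne_of_lt hlneg)]
              · rw [hXlY ω h0, le_div_iff₀ ht]
                have h2 : t * Y ω + 1 ≤ Real.exp (t * Y ω) := Real.add_one_le_exp _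
                nlinarith [Real.exp_pos (t * Y ω)]
            have hYint : Integrable Y P := by
              refine Integrable.mono' (hint.div_const t) hYmeas.aestronglyMeasurable
                (Filter.Eventually.of_forall fun ω => ?_)
              rw [Real.norm_eq_abs, abs_of_nonneg (hY0 ω)]
              exact hYle ω
            set μr := ∫ ω, Y ω ∂P with hμrdef
            have hμofReal : μ = ENNReal.ofReal μr := by
              rw [hμ, hμrdef]
              exact (ofReal_integral_eq_lintegral_ofReal hYint
                (Filter.Eventually.of_forall hY0)).symm
            have hcμr : 1 / c < μr := by
              rw [hμofReal] at hcμ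
              exact (ENNReal.ofReal_lt_ofReal_iff_of_nonneg (by positivity)).1 hcμ
            -- tangent-line (Jensen) lower bound for q_l
            have hJ : w * Real.exp (t / c) ≤ ∫ ω, X 0 ω ^ l ∂P := by
              have hptw : ∀ ω, Real.exp (t / c) *
                  ((1 - t / c) * A.indicator (1 : Ω → ℝ) ω + t * Y ω) ≤ X 0 ω ^ l := by
                intro ω
                by_cases h0 : X 0 ω = 0
                · have hωA : ω ∉ A := by simp [hAdef, h0]
                  have hY00 : Y ω = 0 := by simp [hYdef, h0]
                  rw [Set.indicator_of_notMem hωA, hY00, h0,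
                    Real.zero_rpow (ne_of_lt hlneg)]
                  simp
                · have hωA : ω ∈ A := h0
                  rw [Set.indicator_of_mem hωA, hXlY ω h0]
                  have h2 : (t * Y ω - t / c) + 1 ≤ Real.exp (t * Y ω - t / c) :=
                    Real.add_one_le_exp _
                  have h3 : Real.exp (t / c) * Real.exp (t * Y ω - t / c)
                      = Real.exp (t * Y ω) := by
                    rw [← Real.exp_add]; ring_nf
                  calc Real.exp (t / c) * ((1 - t / c) * 1 + t * Y ω)
                      = Real.exp (t / c) * ((t * Y ω - t / c) + 1) := by ring
                    _ ≤ Real.exp (t / c) * Real.exp (t * Y ω - t / c) :=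
                        mul_le_mul_of_nonneg_left h2 (Real.exp_pos _).le
                    _ = Real.exp (t * Y ω) := h3
              have hgint : Integrable (fun ω => Real.exp (t / c) *
                  ((1 - t / c) * A.indicator (1 : Ω → ℝ) ω + t * Y ω)) P :=
                (((hIint.const_mul _).add (hYint.const_mul _)).const_mul _)
              have hig := integral_mono hgint hint hptw
              have hcalc : ∫ ω, Real.exp (t / c) *
                  ((1 - t / c) * A.indicator (1 : Ω → ℝ) ω + t * Y ω) ∂P
                  = Real.exp (t / c) * ((1 - t / c) * w + t * μr) := by
                rw [integral_const_mul, integral_add (hIint.const_mul _) (hYint.const_mul _),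
                  integral_const_mul, integral_const_mul, hIw]
              rw [hcalc] at hig
              refine le_trans ?_ hig
              have hwc : w / c ≤ 1 / c := (div_le_div_iff_of_pos_right hc).2 hw1
              have : w ≤ (1 - t / c) * w + t * μr := by
                have h4 : w / c ≤ μr := le_of_lt (lt_of_le_of_lt hwc hcμr)
                have h5 : 0 ≤ t * (μr - w / c) := mul_nonneg ht.le (by linarith)
                have h6 : t * (μr - w / c) = (1 - t / c) * w + t * μr - w := by
                  field_simp; ring
                linarith [h6 ▸ h5]
              calc w * Real.exp (t / c) = Real.exp (t / c) * w := by ring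
                _ ≤ Real.exp (t / c) * ((1 - t / c) * w + t * μr) :=
                    mul_le_mul_of_nonneg_left this (Real.exp_pos _).le
            -- hence s_l ≤ -c log w
            have hql_pos' : 0 < ∫ ω, X 0 ω ^ l ∂P :=
              lt_of_lt_of_le (by positivity) hJ
            have hlog : Real.log w + t / c ≤ Real.log (∫ ω, X 0 ω ^ l ∂P) := by
              have := (Real.log_le_log_iff (by positivity) hql_pos').2 hJ
              rwa [Real.log_mul hw0.ne' (Real.exp_pos _).ne', Real.log_exp] at this
            have hsl : -l - c * Real.log (∫ ω, X 0 ω ^ l ∂P) ≤ -c * Real.log w := by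
              have h7 : c * (Real.log w + t / c) ≤ c * Real.log (∫ ω, X 0 ω ^ l ∂P) :=
                mul_le_mul_of_nonneg_left hlog hc.le
              have h8 : c * (Real.log w + t / c) = c * Real.log w + t := by
                field_simp
              simp only [htdef] at *
              linarith
            have hu_lt : u < -c * Real.log w := lt_of_lt_of_le hul hsl
            -- now pick a small positive exponent
            set δ := -c * Real.log w - u with hδdef
            have hδ : 0 < δ := by simp only [hδdef]; linarith
            refine ⟨min 1 (δ / 2), lt_min one_pos (by positivity), ?_⟩
            set l' := min 1 (δ / 2) with hl'def
            have hl'pos : 0 < l' := lt_min one_pos (by positivity)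
            have hql'w : ∫ ω, X 0 ω ^ l' ∂P ≤ w := hql_le_w l' hl'pos
            have hql'pos : 0 < ∫ ω, X 0 ω ^ l' ∂P := hql_pos l' hl'pos
            have hlogle : Real.log (∫ ω, X 0 ω ^ l' ∂P) ≤ Real.log w :=
              (Real.log_le_log_iff hql'pos hw0).2 hql'w
            have hl'le : l' ≤ δ / 2 := min_le_right _ _
            have : -l' - c * Real.log (∫ ω, X 0 ω ^ l' ∂P) ≥ -l' - c * Real.log w := by
              have := mul_le_mul_of_nonneg_left hlogle hc.le
              linarith
            have h9 : -l' - c * Real.log w > u := by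
              simp only [hδdef] at hl'le
              linarith
            linarith
          · subst hlzero
            exfalso
            have : ∫ ω, X 0 ω ^ (0:ℝ) ∂P = 1 := by
              simp [Real.rpow_zero]
            rw [this] at hul
            simp [Real.log_one] at hul
            linarith
          · exact ⟨l, hlpos, hul⟩
        obtain ⟨l', hl'pos, hl'u⟩ := hfind
        have := height_bound_single P hmeas hrange hindep hident hl'pos hc hn
          (hql_pos l' hl'pos)
        refine this.trans (ENNReal.ofReal_le_ofReal ?_)
        refine Real.rpow_le_rpow_of_exponent_le hn1 ?_
        linarith
      · rw [if_neg hint] at hl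
        simp at hl
  -- pass to the limit in u
  have hev : ∀ᶠ ε in nhdsWithin (0:ℝ) (Set.Ioi 0),
      P {ω | c * Real.log n + 2 ≤ (sarrtHeight X n ω : ℝ)}
        ≤ ENNReal.ofReal ((n:ℝ) ^ (1 - (r - ε))) := by
    refine eventually_nhdsWithin_of_forall fun ε hε => ?_
    exact key (r - ε) (by simp at hε; linarith)
  have htend : Tendsto (fun ε : ℝ => ENNReal.ofReal ((n:ℝ) ^ (1 - (r - ε))))
      (nhdsWithin (0:ℝ) (Set.Ioi 0)) (nhds (ENNReal.ofReal ((n:ℝ) ^ (1 - r)))) := by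
    have hcont : Continuous fun ε : ℝ => (n:ℝ) ^ (1 - (r - ε)) := by
      have : (fun ε : ℝ => (n:ℝ) ^ (1 - (r - ε)))
          = fun ε : ℝ => Real.exp (Real.log n * (1 - (r - ε))) := by
        funext ε; rw [Real.rpow_def_of_pos hn0]
      rw [this]
      exact Real.continuous_exp.comp (continuous_const.mul (by continuity))
    have h0 : ENNReal.ofReal ((n:ℝ) ^ (1 - (r - 0))) = ENNReal.ofReal ((n:ℝ) ^ (1 - r)) := by
      norm_num
    rw [← h0]
    exact ((ENNReal.continuous_ofReal.comp hcont).tendsto 0).mono_left nhdsWithin_le_nhds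
  have hfin : P {ω | c * Real.log n + 2 ≤ (sarrtHeight X n ω : ℝ)}
      ≤ ENNReal.ofReal ((n:ℝ) ^ (1 - r)) := ge_of_tendsto htend hev
  rwa [← ENNReal.ofReal_rpow_of_pos hn0, ENNReal.ofReal_natCast] at hfin
/-- Upper bound on the height of a SARRT: for `c > α_max`,
`P(H_n ≥ c log n) → 0`; in fact `P(H_n ≥ c log n + 2) ≤ n^{1-Ψ(c)}`. -/
theorem sarrt_height_upper
    {Ω : Type*} [MeasurableSpace Ω] (P : Measure Ω) [IsProbabilityMeasure P]
    (X : ℕ → Ω → ℝ)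
    (hmeas : ∀ i, Measurable (X i))
    (hrange : ∀ i ω, X i ω ∈ Set.Ico (0 : ℝ) 1)
    (hindep : iIndepFun X P)
    (hident : ∀ i, IdentDistrib (X i) (X 0) P P)
    (μ : ℝ≥0∞) (hμ : μ = ∫⁻ ω, ENNReal.ofReal (- Real.log (X 0 ω)) ∂P)
    (hμpos : 0 < μ)
    (αmax : ℝ)
    (hα : αmax = sInf {c : ℝ | (μ⁻¹).toReal < c ∧ 1 < psiLogX P (X 0) c}) :
    ∀ c : ℝ, αmax < c →
      (Tendsto (fun n : ℕ => P {ω | c * Real.log n ≤ (sarrtHeight X n ω : ℝ)})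
          atTop (nhds 0)) ∧
      (∀ n : ℕ, 1 ≤ n → ∀ r : ℝ, ENNReal.ofReal r ≤ psiLogX P (X 0) c →
        P {ω | c * Real.log n + 2 ≤ (sarrtHeight X n ω : ℝ)}
          ≤ (n : ℝ≥0∞) ^ (1 - r)) := by
  -- the law of `X 0` is not concentrated at `0`
  have hw : 0 < P {ω | X 0 ω ≠ 0} := by
    by_contra hcon
    push_neg at hcon
    have h0 : P {ω | X 0 ω ≠ 0} = 0 := le_antisymm hcon zero_le
    have hae : ∀ᵐ ω ∂P, X 0 ω = 0 := by
      rw [ae_iff]; exact h0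
    have hμ0 : μ = 0 := by
      rw [hμ, ← lintegral_zero]
      refine lintegral_congr_ae ?_
      filter_upwards [hae] with ω hω
      rw [hω]
      simp
    exact absurd hμ0 hμpos.ne'
  set S := {c : ℝ | (μ⁻¹).toReal < c ∧ 1 < psiLogX P (X 0) c} with hSdef
  -- `S` is nonempty
  have hq1_int : Integrable (fun ω => X 0 ω ^ (1:ℝ)) P := by
    refine integrable_of_bound
      (((Real.continuous_rpow_const zero_le_one).measurable).comp (hmeas 0)) 1 fun ω => ?_
    rw [abs_of_nonneg (Real.rpow_nonneg (hrange 0 ω).1 _)]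
    exact Real.rpow_le_one (hrange 0 ω).1 (hrange 0 ω).2.le zero_le_one
  set q1 := ∫ ω, X 0 ω ^ (1:ℝ) ∂P with hq1def
  have hq1pos : 0 < q1 := by
    rw [hq1def, integral_pos_iff_support_of_nonneg
      (fun ω => Real.rpow_nonneg (hrange 0 ω).1 _) hq1_int]
    have hsupp : Function.support (fun ω => X 0 ω ^ (1:ℝ)) = {ω | X 0 ω ≠ 0} := by
      ext ω
      simp only [Function.mem_support, Set.mem_setOf_eq, Real.rpow_one]
    rw [hsupp]; exact hw
  have hq1lt : q1 < 1 := by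
    have hpos : 0 < ∫ ω, (1 - X 0 ω ^ (1:ℝ)) ∂P := by
      rw [integral_pos_iff_support_of_nonneg
        (fun ω => by simp [Real.rpow_one]; exact (hrange 0 ω).2.le)
        (show Integrable (fun ω => 1 - X 0 ω ^ (1:ℝ)) P from
          (integrable_const (1:ℝ)).sub hq1_int)]
      have hsupp : Function.support (fun ω => 1 - X 0 ω ^ (1:ℝ)) = Set.univ := by
        ext ω
        simp only [Function.mem_support, Set.mem_univ, iff_true]
        rw [Real.rpow_one]
        intro hcontra
        have := (hrange 0 ω).2
        linarith [sub_eq_zero.1 hcontra]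
      rw [hsupp]
      simpa using (IsProbabilityMeasure.ne_zero P)
    have hsub : ∫ ω, (1 - X 0 ω ^ (1:ℝ)) ∂P = 1 - q1 := by
      rw [integral_sub (integrable_const 1) hq1_int, hq1def]
      simp
    rw [hsub] at hpos
    linarith
  have hlogq1 : Real.log q1 < 0 := Real.log_neg hq1pos hq1lt
  set c0 := max ((μ⁻¹).toReal + 1) ((3 / (-Real.log q1)) + 1) with hc0def
  have hc0gt : (μ⁻¹).toReal < c0 :=
    lt_of_lt_of_le (lt_add_one _) (le_max_left _ _)
  have hc0pos : 0 < c0 := lt_of_le_of_lt ENNReal.toReal_nonneg hc0gt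
  have hc03 : 3 / (-Real.log q1) < c0 :=
    lt_of_lt_of_le (lt_add_one _) (le_max_right _ _)
  have hpsi0 : 1 < psiLogX P (X 0) c0 := by
    have hterm : ENNReal.ofReal 2 ≤ psiLogX P (X 0) c0 := by
      rw [psiLogX, legendreLogX, ENNReal.mul_iSup]
      refine le_trans ?_ (le_iSup _ (1:ℝ))
      rw [if_pos hq1_int, ← ENNReal.ofReal_mul hc0pos.le, ← hq1def]
      refine ENNReal.ofReal_le_ofReal ?_
      have heq : c0 * ((1:ℝ) * (-1 / c0) - Real.log q1) = -1 + c0 * (-Real.log q1) := by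
        field_simp; ring
      rw [heq]
      have h3 : 3 < c0 * (-Real.log q1) := by
        rw [div_lt_iff₀ (by linarith : 0 < -Real.log q1)] at hc03
        linarith [hc03]
      linarith
    calc (1:ℝ≥0∞) < ENNReal.ofReal 2 := by
          rw [← ENNReal.ofReal_one]
          exact (ENNReal.ofReal_lt_ofReal_iff (by norm_num)).2 one_lt_two
      _ ≤ _ := hterm
  have hSne : S.Nonempty := ⟨c0, hc0gt, hpsi0⟩
  have hSlb : ∀ x ∈ S, (μ⁻¹).toReal ≤ x := fun x hx => hx.1.le
  have hαge : (μ⁻¹).toReal ≤ αmax := by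
    rw [hα]; exact le_csInf hSne hSlb
  -- converting `(μ⁻¹).toReal < c'` into the form needed by `height_bound`
  have hcμgen : ∀ c' : ℝ, (μ⁻¹).toReal < c' → ENNReal.ofReal (1/c') < μ := by
    intro c' hc'
    have hc'0 : 0 < c' := lt_of_le_of_lt ENNReal.toReal_nonneg hc'
    rcases eq_or_ne μ ⊤ with hμtop | hμtop
    · rw [hμtop]; exact ENNReal.ofReal_lt_top
    · have hμr : 0 < μ.toReal := ENNReal.toReal_pos hμpos.ne' hμtop
      rw [ENNReal.toReal_inv] at hc'
      have hlt : 1 / c' < μ.toReal := by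
        rw [div_lt_iff₀ hc'0]
        have h2 := mul_lt_mul_of_pos_left hc' hμr
        rwa [mul_inv_cancel₀ hμr.ne'] at h2
      calc ENNReal.ofReal (1/c') < ENNReal.ofReal μ.toReal :=
            (ENNReal.ofReal_lt_ofReal_iff hμr).2 hlt
        _ = μ := ENNReal.ofReal_toReal hμtop
  intro c hcα
  have hcμtoReal : (μ⁻¹).toReal < c := lt_of_le_of_lt hαge hcα
  have hc : 0 < c := lt_of_le_of_lt ENNReal.toReal_nonneg hcμtoReal
  constructor
  · -- the height tends to zero in probability
    have hsInflt : sInf S < c := by rw [← hα]; exact hcα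
    obtain ⟨c'', hc''S, hc''lt⟩ := exists_lt_of_csInf_lt hSne hsInflt
    have hc''0 : 0 < c'' := lt_of_le_of_lt ENNReal.toReal_nonneg hc''S.1
    obtain ⟨r, hr1, hrle⟩ : ∃ r : ℝ, 1 < r ∧ ENNReal.ofReal r ≤ psiLogX P (X 0) c'' := by
      rcases eq_or_ne (psiLogX P (X 0) c'') ⊤ with htop | htop
      · exact ⟨2, one_lt_two, htop ▸ le_top⟩
      · refine ⟨(psiLogX P (X 0) c'').toReal, ?_, ?_⟩
        · have h2 := hc''S.2
          have := (ENNReal.toReal_lt_toReal (by simp) htop).2 h2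
          simpa using this
        · rw [ENNReal.ofReal_toReal htop]
    have hlog2 : ∀ᶠ (n:ℕ) in atTop, 2/(c - c'') ≤ Real.log n :=
      (Real.tendsto_log_atTop.comp tendsto_natCast_atTop_atTop).eventually_ge_atTop _
    have h1le : ∀ᶠ (n:ℕ) in atTop, 1 ≤ n := eventually_ge_atTop 1
    have hbound : ∀ᶠ (n:ℕ) in atTop,
        P {ω | c * Real.log n ≤ (sarrtHeight X n ω : ℝ)}
          ≤ ENNReal.ofReal ((n:ℝ) ^ (1 - r)) := by
      filter_upwards [hlog2, h1le] with n hlogn hn1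
      have hcc : 0 < c - c'' := by linarith
      have hsub : {ω | c * Real.log n ≤ (sarrtHeight X n ω : ℝ)}
          ⊆ {ω | c'' * Real.log n + 2 ≤ (sarrtHeight X n ω : ℝ)} := by
        intro ω hω
        simp only [Set.mem_setOf_eq] at hω ⊢
        have h2 : 2 ≤ (c - c'') * Real.log n := by
          rw [div_le_iff₀ hcc] at hlogn
          linarith [hlogn]
        nlinarith [hω]
      have hb := height_bound P hmeas hrange hindep hident hw μ hμ hc''0
        (hcμgen c'' hc''S.1) hn1 hrle
      have heq : ((n:ℕ) : ℝ≥0∞) ^ (1 - r) = ENNReal.ofReal ((n:ℝ) ^ (1 - r)) := by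
        rw [← ENNReal.ofReal_natCast, ENNReal.ofReal_rpow_of_pos (by exact_mod_cast hn1)]
      exact le_trans (measure_mono hsub) (heq ▸ hb)
    have htendsto : Tendsto (fun n : ℕ => ENNReal.ofReal ((n:ℝ) ^ (1 - r)))
        atTop (nhds 0) := by
      have hreal : Tendsto (fun n : ℕ => (n:ℝ) ^ (1 - r)) atTop (nhds 0) := by
        simp only [show (1:ℝ) - r = -(r-1) from by ring]
        exact (tendsto_rpow_neg_atTop (by linarith)).comp tendsto_natCast_atTop_atTop
      have := (ENNReal.continuous_ofReal.tendsto 0).comp hreal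
      simpa [Function.comp_def] using this
    exact tendsto_of_tendsto_of_tendsto_of_le_of_le' tendsto_const_nhds htendsto
      (Filter.Eventually.of_forall fun n => zero_le) hbound
  · intro n hn r hrle
    exact height_bound P hmeas hrange hindep hident hw μ hμ hc
      (hcμgen c hcμtoReal) hn hrle
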